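/- arXiv:1811.10077 — 2 statements merged into one kernel-verified Lean document; each statement's English description precedes it below -/
import Mathlib

section
/- Let g, y be square-integrable random vectors and g̃ = E[g|y]. Then the infimum over all measurable functions f : ℂ^L → ℂ^K whose range has cardinality at most M of E[‖g − f(y)‖²] equals E[‖g − g̃‖²] plus the infimum over the same class of functions of E[‖g̃ − f(y)‖²]. That is, the optimal M-level quantizer for the task of estimating g from y is obtained by optimally quantizing the MMSE estimate g̃. -/
/-!
The residual `g - E[g | m]` has zero conditional expectation, so by the pull-out property it is
orthogonal in `L²` to every square-integrable `m`-measurable `h`. Pythagoras then splits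
`E‖g - h‖²` as `E‖g - E[g | m]‖² + E‖E[g | m] - h‖²` for every such `h`. A quantizer applied to
`y` is of this kind for `m = σ(y)`: it is `σ(y)`-measurable and bounded, having finite range.
Hence both infima run over the same family, whose members differ by the constant MMSE term.
-/

open MeasureTheory
open scoped InnerProductSpace

section Pythagoras

variable {Ω E : Type*} {m m₀ : MeasurableSpace Ω} {μ : Measure Ω} [NormedAddCommGroup E]

lemma MeasureTheory.MemLp.integrable_norm_sub_sq {u v : Ω → E} (hu : MemLp u 2 μ)
    (hv : MemLp v 2 μ) : Integrable (fun ω => ‖u ω - v ω‖ ^ 2) μ :=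
  (memLp_two_iff_integrable_sq_norm (hu.sub hv).1).1 (hu.sub hv)

variable [InnerProductSpace ℝ E] [CompleteSpace E] {g h : Ω → E}

lemma integral_inner_sub_condExp_eq_zero (hm : m ≤ m₀) [IsFiniteMeasure μ]
    (hg : MemLp g 2 μ) (hh : MemLp h 2 μ) (hhm : StronglyMeasurable[m] h) :
    ∫ ω, ⟪g ω - μ[g|m] ω, h ω⟫_ℝ ∂μ = 0 := by
  have hr : MemLp (g - μ[g|m]) 2 μ := hg.sub (hg.condExp one_le_two)
  have hr_zero : μ[g - μ[g|m]|m] =ᵐ[μ] 0 := by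
    filter_upwards [condExp_sub (hg.integrable one_le_two) integrable_condExp m] with ω hω
    rw [hω, condExp_of_stronglyMeasurable hm stronglyMeasurable_condExp integrable_condExp]
    simp
  have hint : Integrable (fun ω => ⟪(g - μ[g|m]) ω, h ω⟫_ℝ) μ :=
    memLp_one_iff_integrable.1 ((innerSL ℝ).memLp_of_bilin 1 hr hh)
  calc ∫ ω, ⟪g ω - μ[g|m] ω, h ω⟫_ℝ ∂μ = ∫ ω, μ[fun ω => ⟪(g - μ[g|m]) ω, h ω⟫_ℝ|m] ω ∂μ :=
        (integral_condExp hm).symm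
    _ = ∫ ω, ⟪μ[g - μ[g|m]|m] ω, h ω⟫_ℝ ∂μ :=
        integral_congr_ae (condExp_bilin_of_stronglyMeasurable_right (innerSL ℝ) hhm hint
          (hr.integrable one_le_two))
    _ = 0 := integral_eq_zero_of_ae (hr_zero.mono fun ω hω => by simp [hω])

lemma integral_norm_sub_sq_eq_add_of_condExp (hm : m ≤ m₀) [IsFiniteMeasure μ]
    (hg : MemLp g 2 μ) (hh : MemLp h 2 μ) (hhm : StronglyMeasurable[m] h) :
    ∫ ω, ‖g ω - h ω‖ ^ 2 ∂μ
      = ∫ ω, ‖g ω - μ[g|m] ω‖ ^ 2 ∂μ + ∫ ω, ‖μ[g|m] ω - h ω‖ ^ 2 ∂μ := by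
  have hg' : MemLp (μ[g|m]) 2 μ := hg.condExp one_le_two
  have h_cross : ∫ ω, ⟪g ω - μ[g|m] ω, μ[g|m] ω - h ω⟫_ℝ ∂μ = 0 :=
    integral_inner_sub_condExp_eq_zero hm hg (hg'.sub hh) (stronglyMeasurable_condExp.sub hhm)
  have hint_cross : Integrable (fun ω => ⟪g ω - μ[g|m] ω, μ[g|m] ω - h ω⟫_ℝ) μ :=
    memLp_one_iff_integrable.1 ((innerSL ℝ).memLp_of_bilin 1 (hg.sub hg') (hg'.sub hh))
  have hint₁ := hg.integrable_norm_sub_sq hg'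
  have hint₂ := hg'.integrable_norm_sub_sq hh
  have hint₁₂ : Integrable (fun ω => ‖g ω - μ[g|m] ω‖ ^ 2
      + 2 * ⟪g ω - μ[g|m] ω, μ[g|m] ω - h ω⟫_ℝ) μ := hint₁.add (hint_cross.const_mul 2)
  calc ∫ ω, ‖g ω - h ω‖ ^ 2 ∂μ
      = ∫ ω, ‖g ω - μ[g|m] ω‖ ^ 2 + 2 * ⟪g ω - μ[g|m] ω, μ[g|m] ω - h ω⟫_ℝ
          + ‖μ[g|m] ω - h ω‖ ^ 2 ∂μ := by
        simp_rw [← norm_add_sq_real, sub_add_sub_cancel]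
    _ = ∫ ω, ‖g ω - μ[g|m] ω‖ ^ 2 ∂μ + 2 * ∫ ω, ⟪g ω - μ[g|m] ω, μ[g|m] ω - h ω⟫_ℝ ∂μ
          + ∫ ω, ‖μ[g|m] ω - h ω‖ ^ 2 ∂μ := by
        rw [integral_add hint₁₂ hint₂, integral_add hint₁ (hint_cross.const_mul 2),
          integral_const_mul]
    _ = _ := by rw [h_cross, mul_zero, add_zero]

lemma lintegral_norm_sub_sq_eq_add_of_condExp (hm : m ≤ m₀) [IsFiniteMeasure μ]
    (hg : MemLp g 2 μ) (hh : MemLp h 2 μ) (hhm : StronglyMeasurable[m] h) :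
    ∫⁻ ω, ENNReal.ofReal (‖g ω - h ω‖ ^ 2) ∂μ
      = ∫⁻ ω, ENNReal.ofReal (‖g ω - μ[g|m] ω‖ ^ 2) ∂μ
        + ∫⁻ ω, ENNReal.ofReal (‖μ[g|m] ω - h ω‖ ^ 2) ∂μ := by
  have hg' : MemLp (μ[g|m]) 2 μ := hg.condExp one_le_two
  have sq_norm_sub {u v : Ω → E} (hu : MemLp u 2 μ) (hv : MemLp v 2 μ) :
      ∫⁻ ω, ENNReal.ofReal (‖u ω - v ω‖ ^ 2) ∂μ = ENNReal.ofReal (∫ ω, ‖u ω - v ω‖ ^ 2 ∂μ) :=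
    (ofReal_integral_eq_lintegral_ofReal (hu.integrable_norm_sub_sq hv)
      (.of_forall fun _ => by positivity)).symm
  rw [sq_norm_sub hg hh, sq_norm_sub hg hg', sq_norm_sub hg' hh,
    integral_norm_sub_sq_eq_add_of_condExp hm hg hh hhm,
    ENNReal.ofReal_add (integral_nonneg fun _ => by positivity)
      (integral_nonneg fun _ => by positivity)]

end Pythagoras

lemma lintegral_sum_norm_sub_sq_eq_add_of_condExp {Ω ι 𝕜 : Type*} {m m₀ : MeasurableSpace Ω}
    {μ : Measure Ω} [Fintype ι] [RCLike 𝕜] (hm : m ≤ m₀) [IsFiniteMeasure μ] {g h : Ω → ι → 𝕜}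
    (hg : MemLp g 2 μ) (hh : MemLp h 2 μ) (hhm : StronglyMeasurable[m] h) :
    ∫⁻ ω, ENNReal.ofReal (∑ i, ‖g ω i - h ω i‖ ^ 2) ∂μ
      = ∫⁻ ω, ENNReal.ofReal (∑ i, ‖g ω i - μ[g|m] ω i‖ ^ 2) ∂μ
        + ∫⁻ ω, ENNReal.ofReal (∑ i, ‖μ[g|m] ω i - h ω i‖ ^ 2) ∂μ := by
  -- `ι → 𝕜` carries the sup norm; the sum of squares is the norm of the Euclidean copy.
  let T : (ι → 𝕜) →L[ℝ] EuclideanSpace 𝕜 ι :=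
    (PiLp.continuousLinearEquiv 2 ℝ fun _ : ι => 𝕜).symm.toContinuousLinearMap
  have h_sum_eq_norm (u v : ι → 𝕜) : ∑ i, ‖u i - v i‖ ^ 2 = ‖T u - T v‖ ^ 2 := by
    simp [T, EuclideanSpace.norm_sq_eq]
  have hTg : MemLp (fun ω => T (g ω)) 2 μ := T.comp_memLp' hg
  have hTh : MemLp (fun ω => T (h ω)) 2 μ := T.comp_memLp' hh
  have h_comm : ∀ᵐ ω ∂μ, T (μ[g|m] ω) = μ[fun ω => T (g ω)|m] ω :=
    T.comp_condExp_comm (hg.integrable one_le_two)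
  simp_rw [h_sum_eq_norm]
  rw [lintegral_norm_sub_sq_eq_add_of_condExp hm hTg hTh
    (T.continuous.comp_stronglyMeasurable hhm)]
  congr 1 <;> exact lintegral_congr_ae (h_comm.mono fun ω hω => by simp only [hω])

lemma MeasureTheory.memLp_of_finite_range {Ω F : Type*} {m₀ : MeasurableSpace Ω} {μ : Measure Ω}
    [NormedAddCommGroup F] [IsFiniteMeasure μ] {p : ENNReal} {u : Ω → F}
    (hu : AEStronglyMeasurable u μ) (h_fin : (Set.range u).Finite) : MemLp u p μ := by
  obtain ⟨C, hC⟩ := (h_fin.image norm).bddAbove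
  exact MemLp.of_bound hu C (.of_forall fun ω => hC ⟨u ω, ⟨ω, rfl⟩, rfl⟩)

theorem optimal_quantizer_quantizes_mmse_estimate_general
    {Ω : Type*} [MeasurableSpace Ω] (μ : Measure Ω) [IsProbabilityMeasure μ]
    {K L : ℕ} (M : ℕ)
    (g : Ω → (Fin K → ℂ)) (y : Ω → (Fin L → ℂ))
    (hy : Measurable y)
    (hg2 : MemLp g 2 μ)
    (gtilde : Ω → (Fin K → ℂ))
    (hgtilde : gtilde = μ[g | MeasurableSpace.comap y inferInstance]) :
    (⨅ f ∈ {f : (Fin L → ℂ) → (Fin K → ℂ) |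
        Measurable f ∧ (Set.range f).Finite ∧ (Set.range f).ncard ≤ M},
        ∫⁻ ω, ENNReal.ofReal (∑ i, ‖g ω i - f (y ω) i‖ ^ 2) ∂μ)
      = (∫⁻ ω, ENNReal.ofReal (∑ i, ‖g ω i - gtilde ω i‖ ^ 2) ∂μ)
        + ⨅ f ∈ {f : (Fin L → ℂ) → (Fin K → ℂ) |
            Measurable f ∧ (Set.range f).Finite ∧ (Set.range f).ncard ≤ M},
            ∫⁻ ω, ENNReal.ofReal (∑ i, ‖gtilde ω i - f (y ω) i‖ ^ 2) ∂μ := by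
  subst hgtilde
  simp_rw [ENNReal.add_iInf]
  refine iInf_congr fun f => iInf_congr fun ⟨hf, hf_fin, _⟩ => ?_
  have hfy : StronglyMeasurable[MeasurableSpace.comap y inferInstance] (f ∘ y) :=
    (hf.comp (comap_measurable y)).stronglyMeasurable
  exact lintegral_sum_norm_sub_sq_eq_add_of_condExp hy.comap_le hg2
    (memLp_of_finite_range (hf.comp hy).aestronglyMeasurable
      (hf_fin.subset (Set.range_comp_subset_range y f))) hfy

/-- Optimal task-based quantization reduces to quantizing the MMSE estimate:
for square-integrable random vectors `g : Ω → ℂ^K`, `y : Ω → ℂ^L` with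
`g̃ = E[g | y]`, the infimum over all measurable functions `f : ℂ^L → ℂ^K` whose
range has cardinality at most `M` of `E[‖g − f(y)‖²]` equals `E[‖g − g̃‖²]` plus
the infimum over the same class of `E[‖g̃ − f(y)‖²]`. -/
theorem optimal_quantizer_quantizes_mmse_estimate
    {Ω : Type*} [MeasurableSpace Ω] (μ : Measure Ω) [IsProbabilityMeasure μ]
    {K L : ℕ} (M : ℕ)
    (g : Ω → (Fin K → ℂ)) (y : Ω → (Fin L → ℂ))
    (hg : Measurable g) (hy : Measurable y)
    (hg2 : MemLp g 2 μ)
    (gtilde : Ω → (Fin K → ℂ))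
    (hgtilde : gtilde = μ[g | MeasurableSpace.comap y inferInstance]) :
    (⨅ f ∈ {f : (Fin L → ℂ) → (Fin K → ℂ) |
        Measurable f ∧ (Set.range f).Finite ∧ (Set.range f).ncard ≤ M},
        ∫⁻ ω, ENNReal.ofReal (∑ i, ‖g ω i - f (y ω) i‖ ^ 2) ∂μ)
      = (∫⁻ ω, ENNReal.ofReal (∑ i, ‖g ω i - gtilde ω i‖ ^ 2) ∂μ)
        + ⨅ f ∈ {f : (Fin L → ℂ) → (Fin K → ℂ) |
            Measurable f ∧ (Set.range f).Finite ∧ (Set.range f).ncard ≤ M},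
            ∫⁻ ω, ENNReal.ofReal (∑ i, ‖gtilde ω i - f (y ω) i‖ ^ 2) ∂μ :=
  optimal_quantizer_quantizes_mmse_estimate_general μ M g y hy hg2 gtilde hgtilde
end

section
/- Under the setting of the previous pilot model (S·Sᴴ = τ·I_K, Σ_y = Σ_m Sᵀ D_m² S* + σ²I_τ, B_{u,u} = τ(D_1)_{u,u}²/(σ² + τΣ_m(D_m)_{u,u}²)), define Γ = τ^{-1}·B·S* ∈ ℂ^{K×τ}. Then Γ·Σ_y·Γᴴ = Φ², where Φ ∈ ℝ^{K×K} is diagonal with Φ_{u,u}² = B_{u,u}·(D_1)_{u,u}². -/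
/-!
The rows of `C = S*` satisfy `C · Sᵀ = conj (S · Sᴴ) = τ · I`, and `Σ_y = Σ_m Cᴴ D_m² C + σ² I`
with `Cᴴ = Sᵀ`. Hence `C Σ_y Sᵀ = τ · diag (σ² + τ Σ_m d_{m,u}²)`, so `Γ Σ_y Γᴴ` is the diagonal
matrix with entries `τ⁻¹ b_u² (σ² + τ Σ_m d_{m,u}²) = b_u d_{0,u}²` by the definition of `b_u`.
-/

theorem inv_mul_inv_mul_self {G₀ : Type*} [GroupWithZero G₀] (a : G₀) : a⁻¹ * a⁻¹ * a = a⁻¹ := by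
  rcases eq_or_ne a 0 with rfl | ha
  · simp
  · rw [mul_assoc, inv_mul_cancel₀ ha, mul_one]

/-- No side conditions are needed: if `t = 0` or `a = 0` then `b = 0` (`x / 0 = 0`). -/
theorem inv_mul_mul_mul_self_of_eq_mul_div {K : Type*} [Field K] {t x a b : K}
    (hb : b = t * x / a) : t⁻¹ * (b * a * b) = b * x := by
  rcases eq_or_ne a 0 with rfl | ha
  · simp [hb]
  rcases eq_or_ne t 0 with rfl | ht
  · simp [hb]
  rw [hb]; field_simp

namespace Matrix

section Sandwich
variable {m n ι R : Type*} [Fintype m] [Fintype n] [Fintype ι] [DecidableEq m]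
  [CommSemiring R]

theorem mul_mul_mul_eq_smul_smul_of_mul_eq_smul_one {C : Matrix m n R} {E : Matrix n m R}
    {c : R} (hCE : C * E = c • 1) (D : Matrix m m R) :
    C * (E * D * C) * E = c • c • D := by
  simp only [← Matrix.mul_assoc, hCE]
  simp only [Matrix.mul_assoc, hCE, Matrix.smul_mul, Matrix.mul_smul, Matrix.one_mul,
    Matrix.mul_one]

theorem mul_sum_add_smul_one_mul_of_mul_eq_smul_one [DecidableEq n] {C : Matrix m n R}
    {E : Matrix n m R} {c : R} (hCE : C * E = c • 1) (D : ι → Matrix m m R) (s : R) :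
    C * (∑ i, E * D i * C + s • 1) * E = c • c • ∑ i, D i + (c * s) • 1 := by
  simp only [Matrix.mul_add, Matrix.add_mul, Matrix.mul_sum, Matrix.sum_mul,
    mul_mul_mul_eq_smul_smul_of_mul_eq_smul_one hCE, Finset.smul_sum, Matrix.mul_smul,
    Matrix.smul_mul, Matrix.mul_one, hCE, smul_smul, mul_comm s]

end Sandwich

section Conjugate
variable {m n R : Type*} [CommSemiring R] [StarRing R]

theorem conjTranspose_map_starRingEnd (S : Matrix m n R) :
    (S.map (starRingEnd R))ᴴ = Sᵀ := by
  ext i j; simp [starRingEnd_apply]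

theorem map_starRingEnd_mul_transpose [Fintype n] (S : Matrix m n R) :
    S.map (starRingEnd R) * Sᵀ = (S * Sᴴ).map (starRingEnd R) := by
  rw [Matrix.map_mul]
  congr 1
  ext i j; simp [starRingEnd_apply]

end Conjugate

end Matrix

open Matrix

theorem pilot_lmmse_covariance_general
    {K τ N : ℕ}
    (S : Matrix (Fin K) (Fin τ) ℂ)
    (hS : S * S.conjTranspose = (τ : ℂ) • (1 : Matrix (Fin K) (Fin K) ℂ))
    (d : Fin (N + 1) → Fin K → ℝ)
    (σ2 : ℝ)
    (Sy : Matrix (Fin τ) (Fin τ) ℂ)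
    (hSy : Sy = (∑ m, S.transpose * Matrix.diagonal (fun u => ((d m u : ℂ)) ^ 2)
                  * S.map (starRingEnd ℂ))
              + (σ2 : ℂ) • (1 : Matrix (Fin τ) (Fin τ) ℂ))
    (b : Fin K → ℝ)
    (hb : ∀ u, b u = τ * (d 0 u) ^ 2 / (σ2 + τ * ∑ m, (d m u) ^ 2))
    (Γ : Matrix (Fin K) (Fin τ) ℂ)
    (hΓ : Γ = (τ : ℂ)⁻¹ • (Matrix.diagonal (fun u => (b u : ℂ))
                * S.map (starRingEnd ℂ))) :
    Γ * Sy * Γ.conjTranspose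
      = Matrix.diagonal (fun u => ((b u : ℂ)) * ((d 0 u : ℂ)) ^ 2) := by
  set B := diagonal fun u => (b u : ℂ)
  set C := S.map (starRingEnd ℂ)
  set a : Fin K → ℂ := fun u => σ2 + τ * ∑ m, (d m u : ℂ) ^ 2
  have hCS : C * Sᵀ = (τ : ℂ) • 1 := by
    rw [map_starRingEnd_mul_transpose, hS, map_smul' _ _ _ (map_mul _),
      Matrix.map_one _ (map_zero _) (map_one _), map_natCast]
  have hBC : (B * C)ᴴ = Sᵀ * B := by
    rw [conjTranspose_mul, conjTranspose_map_starRingEnd, diagonal_conjTranspose]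
    simp [B, Pi.star_def]
  have hmiddle : C * Sy * Sᵀ = (τ : ℂ) • diagonal a := by
    rw [hSy, mul_sum_add_smul_one_mul_of_mul_eq_smul_one hCS]
    ext i j
    rcases eq_or_ne i j with rfl | hij
    · simp [a, Matrix.sum_apply, Finset.mul_sum, mul_add, sq, add_comm]
    · simp [Matrix.sum_apply, hij]
  calc Γ * Sy * Γᴴ = ((τ : ℂ)⁻¹ * (τ : ℂ)⁻¹) • (B * (C * Sy * Sᵀ) * B) := by
        rw [hΓ, conjTranspose_smul, hBC]
        simp [Matrix.mul_assoc, smul_smul]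
    _ = diagonal fun u => (τ : ℂ)⁻¹ * (b u * a u * b u) := by
        rw [hmiddle, Matrix.mul_smul, Matrix.smul_mul, smul_smul, diagonal_mul_diagonal,
          diagonal_mul_diagonal, ← diagonal_smul, inv_mul_inv_mul_self]
        rfl
    _ = _ := by
        congr 1
        funext u
        exact inv_mul_mul_mul_self_of_eq_mul_div (by simp only [a]; exact_mod_cast hb u)

/-- Covariance of the per-antenna LMMSE channel estimate (Lemma 4.1): in the pilot
model with `S·Sᴴ = τ·I_K`, `Σ_y = Σ_m Sᵀ D_m² S* + σ²·I_τ`,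
`b_u = τ·d_{0,u}²/(σ² + τ·Σ_m d_{m,u}²)` and `Γ = τ⁻¹·B·S*`, one has
`Γ·Σ_y·Γᴴ = Φ²` where `Φ` is diagonal with `Φ_{u,u}² = b_u·d_{0,u}²`. -/
theorem pilot_lmmse_covariance
    {K τ N : ℕ} (hKτ : K ≤ τ)
    (S : Matrix (Fin K) (Fin τ) ℂ)
    (hS : S * S.conjTranspose = (τ : ℂ) • (1 : Matrix (Fin K) (Fin K) ℂ))
    (d : Fin (N + 1) → Fin K → ℝ) (hd : ∀ m u, 0 ≤ d m u)
    (σ2 : ℝ) (hσ : 0 < σ2)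
    (Sy : Matrix (Fin τ) (Fin τ) ℂ)
    (hSy : Sy = (∑ m, S.transpose * Matrix.diagonal (fun u => ((d m u : ℂ)) ^ 2)
                  * S.map (starRingEnd ℂ))
              + (σ2 : ℂ) • (1 : Matrix (Fin τ) (Fin τ) ℂ))
    (b : Fin K → ℝ)
    (hb : ∀ u, b u = τ * (d 0 u) ^ 2 / (σ2 + τ * ∑ m, (d m u) ^ 2))
    (Γ : Matrix (Fin K) (Fin τ) ℂ)
    (hΓ : Γ = (τ : ℂ)⁻¹ • (Matrix.diagonal (fun u => (b u : ℂ))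
                * S.map (starRingEnd ℂ))) :
    Γ * Sy * Γ.conjTranspose
      = Matrix.diagonal (fun u => ((b u : ℂ)) * ((d 0 u : ℂ)) ^ 2) :=
  pilot_lmmse_covariance_general S hS d σ2 Sy hSy b hb Γ hΓ
end
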